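/- Let u⋆ ∈ C⁴([0,1]²) satisfy ∂₁₁u⋆ + (5/4)∂₂₂u⋆ = −x₂·∂₁u⋆·∂₁₁u⋆ on [0,1]², with Neumann conditions ∂₂u⋆(p, 0) = 0 for all p and ∂₁u⋆(0, x₂) = 0 for all x₂, along with ∂₁u⋆(0,0) = 0. Then ∂₁₁u⋆(0,0) = 0. -/

import Mathlib

noncomputable def pt (a b : ℝ) : EuclideanSpace ℝ (Fin 2) :=
  (WithLp.equiv 2 (Fin 2 → ℝ)).symm ![a, b]

/-- mixed second partial derivative `∂ᵥ∂_w u` -/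
noncomputable def D2 (u : EuclideanSpace ℝ (Fin 2) → ℝ)
    (x w w' : EuclideanSpace ℝ (Fin 2)) : ℝ :=
  fderiv ℝ (fun y => fderiv ℝ u y w') x w

/-!
Write `∂ᵥ` for the derivative in direction `v`. Differentiating the equation
`∂₁₁u + c ∂₂₂u = -x₂ ∂₁u ∂₁₁u` once in `x₂` on the bottom edge `x₂ = 0`, where the factor `x₂`
disappears, and then once in `x₁` at the origin gives
`∂₁∂₂∂₁₁u + c ∂₁∂₂∂₂₂u = -(∂₁₁u)² - ∂₁u ∂₁₁₁u`.
By symmetry of derivatives the left side is `∂₁₁₁(∂₂u) + c ∂₂₂₂(∂₁u)`; both terms vanish because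
`∂₂u = 0` on the bottom edge and `∂₁u = 0` on the left edge, which also kills `∂₁u` at the origin.
Hence `(∂₁₁u)² = 0` there.
-/

open Set

theorem HasDerivAt.eq_of_eqOn {G : Type*} [NormedAddCommGroup G] [NormedSpace ℝ G]
    {f g : ℝ → G} {f' g' : G} {s : Set ℝ} {t : ℝ} (hs : UniqueDiffOn ℝ s) (ht : t ∈ s)
    (hf : HasDerivAt f f' t) (hg : HasDerivAt g g' t) (hfg : EqOn f g s) : f' = g' :=
  (hs t ht).eq_deriv s hf.hasDerivWithinAt (hg.hasDerivWithinAt.congr_of_mem hfg ht)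

section DirDeriv

variable {E G : Type*} [NormedAddCommGroup E] [NormedSpace ℝ E]
  [NormedAddCommGroup G] [NormedSpace ℝ G]

noncomputable def dirDeriv (v : E) (F : E → G) : E → G := fun x => fderiv ℝ F x v

theorem ContDiff.dirDeriv {m n : WithTop ℕ∞} {F : E → G} (hF : ContDiff ℝ n F) (v : E)
    (hmn : m + 1 ≤ n) : ContDiff ℝ m (_root_.dirDeriv v F) :=
  (hF.fderiv_right hmn).clm_apply contDiff_const

theorem ContDiff.differentiable_dirDeriv {n : WithTop ℕ∞} {F : E → G} (hF : ContDiff ℝ n F)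
    (v : E) (hn : 2 ≤ n) : Differentiable ℝ (_root_.dirDeriv v F) :=
  (hF.dirDeriv v (m := 1) hn).differentiable one_ne_zero

theorem dirDeriv_comm {F : E → G} (hF : ContDiff ℝ 2 F) (v w : E) :
    dirDeriv v (dirDeriv w F) = dirDeriv w (dirDeriv v F) := by
  funext x
  have hd : DifferentiableAt ℝ (fderiv ℝ F) x :=
    ((hF.fderiv_right (m := 1) (by norm_num)).differentiable (by norm_num)).differentiableAt
  have happly (v' u : E) : dirDeriv v' (dirDeriv u F) x = fderiv ℝ (fderiv ℝ F) x v' u := by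
    change fderiv ℝ (fun y => fderiv ℝ F y u) x v' = _
    rw [fderiv_clm_apply hd (differentiableAt_const u)]
    simp
  rw [happly, happly, (hF.contDiffAt.isSymmSndFDerivAt (by simp)).eq]

theorem hasDerivAt_comp_add_smul {F : E → G} {x v : E} {t : ℝ}
    (hF : DifferentiableAt ℝ F (x + t • v)) :
    HasDerivAt (fun s : ℝ => F (x + s • v)) (dirDeriv v F (x + t • v)) t :=
  hF.hasFDerivAt.comp_hasDerivAt t (((hasDerivAt_id t).smul_const v).const_add x |>.congr_deriv
    (one_smul ℝ v))

theorem dirDeriv_eq_zero_of_eqOn {F : E → G} {x v : E} {s : Set ℝ} (hs : UniqueDiffOn ℝ s)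
    (hF : Differentiable ℝ F) (hzero : ∀ t ∈ s, F (x + t • v) = 0) :
    ∀ t ∈ s, dirDeriv v F (x + t • v) = 0 := fun t ht =>
  (hasDerivAt_comp_add_smul (hF _)).eq_of_eqOn hs ht (hasDerivAt_const t 0) hzero

theorem iterate_dirDeriv_eq_zero_of_eqOn {x v : E} {s : Set ℝ} (hs : UniqueDiffOn ℝ s) :
    ∀ {n : ℕ} {F : E → G}, ContDiff ℝ n F → (∀ t ∈ s, F (x + t • v) = 0) →
      ∀ t ∈ s, (dirDeriv v)^[n] F (x + t • v) = 0
  | 0, _, _, hzero => hzero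
  | n + 1, F, hF, hzero => by
    rw [Nat.cast_succ] at hF
    exact iterate_dirDeriv_eq_zero_of_eqOn (n := n) hs (hF.dirDeriv v le_rfl)
      (dirDeriv_eq_zero_of_eqOn hs (hF.differentiable (by simp)) hzero)

theorem dirDeriv_iterate_dirDeriv_comm (v w : E) :
    ∀ {n : ℕ} {F : E → G}, ContDiff ℝ (n + 1) F →
      dirDeriv w ((dirDeriv v)^[n] F) = (dirDeriv v)^[n] (dirDeriv w F)
  | 0, _, _ => rfl
  | n + 1, F, hF => by
    rw [Nat.cast_succ] at hF
    rw [Function.iterate_succ_apply, Function.iterate_succ_apply,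
      dirDeriv_iterate_dirDeriv_comm v w (hF.dirDeriv v le_rfl),
      dirDeriv_comm (hF.of_le (by norm_cast; omega))]

end DirDeriv

local notation "e₁" => pt 1 0
local notation "e₂" => pt 0 1

section Square

variable {G : Type*} [NormedAddCommGroup G] [NormedSpace ℝ G]

theorem pt_add_smul_snd (p t : ℝ) : pt p 0 + t • e₂ = pt p t := by
  ext i; fin_cases i <;> simp [pt]

theorem pt_add_smul_fst (p c : ℝ) : pt 0 c + p • e₁ = pt p c := by
  ext i; fin_cases i <;> simp [pt]

theorem hasDerivAt_comp_pt_snd {F : EuclideanSpace ℝ (Fin 2) → G} (hF : Differentiable ℝ F)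
    (p t : ℝ) : HasDerivAt (fun t => F (pt p t)) (dirDeriv e₂ F (pt p t)) t := by
  simpa only [pt_add_smul_snd] using hasDerivAt_comp_add_smul (x := pt p 0) (v := e₂) (hF _)

theorem hasDerivAt_comp_pt_fst {F : EuclideanSpace ℝ (Fin 2) → G} (hF : Differentiable ℝ F)
    (p c : ℝ) : HasDerivAt (fun p => F (pt p c)) (dirDeriv e₁ F (pt p c)) p := by
  simpa only [pt_add_smul_fst] using hasDerivAt_comp_add_smul (x := pt 0 c) (v := e₁) (hF _)

end Square

def SolvesOnSquare (c : ℝ) (u : EuclideanSpace ℝ (Fin 2) → ℝ) : Prop :=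
  ∀ p ∈ Icc (0 : ℝ) 1, ∀ t ∈ Icc (0 : ℝ) 1,
    dirDeriv e₁ (dirDeriv e₁ u) (pt p t) + c * dirDeriv e₂ (dirDeriv e₂ u) (pt p t) =
      -(t * dirDeriv e₁ u (pt p t) * dirDeriv e₁ (dirDeriv e₁ u) (pt p t))

section SolvesOnSquare

variable {u : EuclideanSpace ℝ (Fin 2) → ℝ} {c : ℝ}

theorem dirDeriv_snd_eq_on_bottom (hu : ContDiff ℝ 3 u) (hpde : SolvesOnSquare c u)
    {p : ℝ} (hp : p ∈ Icc (0 : ℝ) 1) :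
    dirDeriv e₂ (dirDeriv e₁ (dirDeriv e₁ u)) (pt p 0) +
        c * dirDeriv e₂ (dirDeriv e₂ (dirDeriv e₂ u)) (pt p 0) =
      -(dirDeriv e₁ u (pt p 0) * dirDeriv e₁ (dirDeriv e₁ u) (pt p 0)) := by
  have ha := hu.differentiable_dirDeriv e₁ (by norm_num)
  have haa := (hu.dirDeriv e₁ (m := 2) (by norm_num)).differentiable_dirDeriv e₁ le_rfl
  have hbb := (hu.dirDeriv e₂ (m := 2) (by norm_num)).differentiable_dirDeriv e₂ le_rfl
  have := HasDerivAt.eq_of_eqOn (uniqueDiffOn_Icc zero_lt_one) (left_mem_Icc.2 zero_le_one)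
    ((hasDerivAt_comp_pt_snd haa p 0).add ((hasDerivAt_comp_pt_snd hbb p 0).const_mul c))
    (((hasDerivAt_id' 0).mul (hasDerivAt_comp_pt_snd ha p 0)).mul
      (hasDerivAt_comp_pt_snd haa p 0)).neg (hpde p hp)
  simpa using this

theorem iterate_dirDeriv_add_eq_at_origin (hu : ContDiff ℝ 4 u) (hpde : SolvesOnSquare c u) :
    (dirDeriv e₁)^[3] (dirDeriv e₂ u) (pt 0 0) + c * (dirDeriv e₂)^[3] (dirDeriv e₁ u) (pt 0 0) =
      -(dirDeriv e₁ (dirDeriv e₁ u) (pt 0 0) * dirDeriv e₁ (dirDeriv e₁ u) (pt 0 0) +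
        dirDeriv e₁ u (pt 0 0) * dirDeriv e₁ (dirDeriv e₁ (dirDeriv e₁ u)) (pt 0 0)) := by
  have ha := hu.differentiable_dirDeriv e₁ (by norm_num)
  have haa := (hu.dirDeriv e₁ (m := 3) (by norm_num)).differentiable_dirDeriv e₁ (by norm_num)
  have haa₂ := ((hu.dirDeriv e₁ (m := 3) (by norm_num)).dirDeriv e₁ (m := 2) (by norm_num)
    ).differentiable_dirDeriv e₂ le_rfl
  have hbb₂ := ((hu.dirDeriv e₂ (m := 3) (by norm_num)).dirDeriv e₂ (m := 2) (by norm_num)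
    ).differentiable_dirDeriv e₂ le_rfl
  have hsym₁ : (dirDeriv e₁)^[3] (dirDeriv e₂ u) =
      dirDeriv e₁ (dirDeriv e₂ (dirDeriv e₁ (dirDeriv e₁ u))) :=
    congrArg (dirDeriv e₁)
      (dirDeriv_iterate_dirDeriv_comm e₁ e₂ (n := 2) (hu.of_le (by norm_num))).symm
  have hsym₂ : (dirDeriv e₂)^[3] (dirDeriv e₁ u) =
      dirDeriv e₁ (dirDeriv e₂ (dirDeriv e₂ (dirDeriv e₂ u))) :=
    (dirDeriv_iterate_dirDeriv_comm e₂ e₁ (n := 3) hu).symm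
  rw [hsym₁, hsym₂]
  have := HasDerivAt.eq_of_eqOn (uniqueDiffOn_Icc zero_lt_one) (left_mem_Icc.2 zero_le_one)
    ((hasDerivAt_comp_pt_fst haa₂ 0 0).add ((hasDerivAt_comp_pt_fst hbb₂ 0 0).const_mul c))
    ((hasDerivAt_comp_pt_fst ha 0 0).mul (hasDerivAt_comp_pt_fst haa 0 0)).neg
    (fun p hp => dirDeriv_snd_eq_on_bottom (hu.of_le (by norm_num)) hpde hp)
  simpa using this

end SolvesOnSquare

theorem stmt_16_general (uStar : EuclideanSpace ℝ (Fin 2) → ℝ) (hreg : ContDiff ℝ 4 uStar)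
    (hpde : ∀ p ∈ Set.Icc (0 : ℝ) 1, ∀ x₂ ∈ Set.Icc (0 : ℝ) 1,
      D2 uStar (pt p x₂) (pt 1 0) (pt 1 0) + 5 / 4 * D2 uStar (pt p x₂) (pt 0 1) (pt 0 1) =
        -(x₂ * fderiv ℝ uStar (pt p x₂) (pt 1 0) * D2 uStar (pt p x₂) (pt 1 0) (pt 1 0)))
    (hNb : ∀ p ∈ Set.Icc (0 : ℝ) 1, fderiv ℝ uStar (pt p 0) (pt 0 1) = 0)
    (hNl : ∀ x₂ ∈ Set.Icc (0 : ℝ) 1, fderiv ℝ uStar (pt 0 x₂) (pt 1 0) = 0) :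
    D2 uStar (pt 0 0) (pt 1 0) (pt 1 0) = 0 := by
  have h01 : (0 : ℝ) ∈ Icc (0 : ℝ) 1 := left_mem_Icc.2 zero_le_one
  have hbottom : (dirDeriv e₁)^[3] (dirDeriv e₂ uStar) (pt 0 0) = 0 := by
    have hNb' : ∀ t ∈ Icc (0 : ℝ) 1, dirDeriv e₂ uStar (pt 0 0 + t • e₁) = 0 := fun t ht => by
      rw [pt_add_smul_fst]; exact hNb t ht
    simpa using iterate_dirDeriv_eq_zero_of_eqOn (uniqueDiffOn_Icc zero_lt_one)
      (hreg.dirDeriv e₂ (m := 3) (by norm_num)) hNb' 0 h01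
  have hleft : (dirDeriv e₂)^[3] (dirDeriv e₁ uStar) (pt 0 0) = 0 := by
    have hNl' : ∀ t ∈ Icc (0 : ℝ) 1, dirDeriv e₁ uStar (pt 0 0 + t • e₂) = 0 := fun t ht => by
      rw [pt_add_smul_snd]; exact hNl t ht
    simpa using iterate_dirDeriv_eq_zero_of_eqOn (uniqueDiffOn_Icc zero_lt_one)
      (hreg.dirDeriv e₁ (m := 3) (by norm_num)) hNl' 0 h01
  have horigin : dirDeriv e₁ uStar (pt 0 0) = 0 := hNl 0 h01
  have key := iterate_dirDeriv_add_eq_at_origin hreg hpde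
  rw [hbottom, hleft, horigin] at key
  change dirDeriv e₁ (dirDeriv e₁ uStar) (pt 0 0) = 0
  exact mul_self_eq_zero.mp (by linarith)

theorem stmt_16 (uStar : EuclideanSpace ℝ (Fin 2) → ℝ) (hreg : ContDiff ℝ 4 uStar)
    (hpde : ∀ p ∈ Set.Icc (0 : ℝ) 1, ∀ x₂ ∈ Set.Icc (0 : ℝ) 1,
      D2 uStar (pt p x₂) (pt 1 0) (pt 1 0) + 5 / 4 * D2 uStar (pt p x₂) (pt 0 1) (pt 0 1) =
        -(x₂ * fderiv ℝ uStar (pt p x₂) (pt 1 0) * D2 uStar (pt p x₂) (pt 1 0) (pt 1 0)))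
    (hNb : ∀ p ∈ Set.Icc (0 : ℝ) 1, fderiv ℝ uStar (pt p 0) (pt 0 1) = 0)
    (hNl : ∀ x₂ ∈ Set.Icc (0 : ℝ) 1, fderiv ℝ uStar (pt 0 x₂) (pt 1 0) = 0)
    (h0 : fderiv ℝ uStar (pt 0 0) (pt 1 0) = 0) :
    D2 uStar (pt 0 0) (pt 1 0) (pt 1 0) = 0 :=
  stmt_16_general uStar hreg hpde hNb hNl
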